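/- (Theorem 4.1, entropy set, supercritical boundary data.) Let f : ℝ → ℝ be C² with f''(u) > 0 for every u, let u_* satisfy f'(u_*) = 0, let u_B > u_*, and let u_B^* < u_* satisfy f(u_B^*) = f(u_B). Then the set E^entropy(u_B) = { u₀ ∈ ℝ : F(u_B) + U'(u_B)·(f(u₀) − f(u_B)) ≥ F(u₀) for every convex entropy pair (U,F) } equals (−∞, u_B^*] ∪ {u_B}. -/

import Mathlib

/-!
Since `F(u_B) - F(u₀) = ∫_{u₀}^{u_B} U' f'`, membership in the entropy set only involves the
nondecreasing C¹ function `g = U'`. For `u₀ ≤ u_B^*` the integral is at least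
`g(u_*) (f(u_B) - f(u₀)) ≥ g(u_B) (f(u_B) - f(u₀))`, because `(g - g(u_*)) f' ≥ 0` everywhere.
Conversely, the smooth cutoffs `g = expNegInvGlue (· - d)`, which vanish left of `d`, violate the
inequality for `u₀ > u_B` (take `d = u_B`) and for `u_B^* < u₀ < u_B`, where `f(u₀) < f(u_B)` by
strict convexity (take `d < u_B` close to `u_B`).
-/

/-- The set of admissible boundary values based on the boundary entropy
inequalities: `u₀` is admissible iff for every convex entropy pair `(U,F)`
(`U` of class C² with `U'' ≥ 0`, `F` differentiable with `F' = U' f'`) one has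
`F(u_B) + U'(u_B)(f(u₀) − f(u_B)) ≥ F(u₀)`. -/
def entropySet (f : ℝ → ℝ) (uB : ℝ) : Set ℝ :=
  { u₀ : ℝ | ∀ U F : ℝ → ℝ, ContDiff ℝ 2 U → (∀ u, 0 ≤ deriv (deriv U) u) →
      Differentiable ℝ F → (∀ u, deriv F u = deriv U u * deriv f u) →
      F u₀ ≤ F uB + deriv U uB * (f u₀ - f uB) }

open Set intervalIntegral

section StrictConvex

variable {f : ℝ → ℝ} {a b x : ℝ}

theorem StrictConvexOn.apply_lt_of_mem_Ioo (hf : StrictConvexOn ℝ univ f) (hfab : f a = f b)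
    (hx : x ∈ Ioo a b) : f x < f b := by
  have hab : a < b := hx.1.trans hx.2
  have := hf.lt_on_openSegment (mem_univ a) (mem_univ b) hab.ne
    (by rwa [openSegment_eq_Ioo hab])
  rwa [hfab, max_self] at this

theorem StrictConvexOn.le_apply_of_le_left (hf : StrictConvexOn ℝ univ f) (hab : a < b)
    (hfab : f a = f b) (hx : x ≤ a) : f b ≤ f x := by
  rcases hx.lt_or_eq with hx | rfl
  · have := hf.lt_on_openSegment (mem_univ x) (mem_univ b) (hx.trans hab).ne
      (by rw [openSegment_eq_Ioo (hx.trans hab)]; exact ⟨hx, hab⟩)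
    rw [hfab, lt_max_iff] at this
    exact this.resolve_right (lt_irrefl _) |>.le
  · exact hfab.ge

end StrictConvex

section EntropyInequality

variable {f g : ℝ → ℝ} {a b k u₀ uB : ℝ}

theorem mem_entropySet_iff (hf' : Continuous (deriv f)) :
    u₀ ∈ entropySet f uB ↔ ∀ g : ℝ → ℝ, ContDiff ℝ 1 g → Monotone g →
      g uB * (f uB - f u₀) ≤ ∫ s in u₀..uB, g s * deriv f s := by
  constructor
  · intro h g hg hmono
    have hgf : Continuous fun s => g s * deriv f s := hg.continuous.mul hf'
    have hU' : deriv (fun u => ∫ s in (0 : ℝ)..u, g s) = g :=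
      funext (hg.continuous.deriv_integral g 0)
    have hU : ContDiff ℝ 2 fun u => ∫ s in (0 : ℝ)..u, g s := by
      rw [show (2 : WithTop ℕ∞) = 1 + 1 from rfl, contDiff_succ_iff_deriv, hU']
      exact ⟨fun u => (hg.continuous.integral_hasStrictDerivAt 0 u).hasDerivAt.differentiableAt,
        by simp, hg⟩
    have hentropy := h _ (fun u => ∫ s in (0 : ℝ)..u, g s * deriv f s) hU
      (fun u => by rw [hU']; exact hmono.deriv_nonneg)
      (fun u => (hgf.integral_hasStrictDerivAt 0 u).hasDerivAt.differentiableAt)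
      (fun u => by rw [hU', hgf.deriv_integral])
    rw [hU'] at hentropy
    rw [← integral_interval_sub_left (hgf.intervalIntegrable _ _)
      (hgf.intervalIntegrable _ _)]
    linarith
  · intro h U F hU hU'' hF hF'
    rw [show (2 : WithTop ℕ∞) = 1 + 1 from rfl, contDiff_succ_iff_deriv] at hU
    have hmono : Monotone (deriv U) :=
      monotone_of_deriv_nonneg (hU.2.2.differentiable one_ne_zero) hU''
    have hF'c : Continuous (deriv F) := by
      rw [funext hF']
      exact hU.2.2.continuous.mul hf'
    have hFTC := integral_deriv_eq_sub (fun x _ => hF x) (hF'c.intervalIntegrable u₀ uB)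
    simp only [hF'] at hFTC
    linarith [h _ hU.2.2 hmono]

theorem mul_sub_le_integral_mul_deriv (hf : Differentiable ℝ f) (hf' : Continuous (deriv f))
    (hg : Continuous g) (hab : a ≤ b)
    (h : ∀ s ∈ Icc a b, k * deriv f s ≤ g s * deriv f s) :
    k * (f b - f a) ≤ ∫ s in a..b, g s * deriv f s := by
  rw [← integral_deriv_eq_sub (fun x _ => hf x) (hf'.intervalIntegrable a b),
    ← integral_const_mul]
  exact integral_mono_on hab ((hf'.const_mul k).intervalIntegrable a b)
    ((hg.mul hf').intervalIntegrable a b) h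

theorem integral_mul_deriv_le_mul_sub (hf : Differentiable ℝ f) (hf' : Continuous (deriv f))
    (hg : Continuous g) (hab : a ≤ b)
    (h : ∀ s ∈ Icc a b, g s * deriv f s ≤ k * deriv f s) :
    ∫ s in a..b, g s * deriv f s ≤ k * (f b - f a) := by
  rw [← integral_deriv_eq_sub (fun x _ => hf x) (hf'.intervalIntegrable a b),
    ← integral_const_mul]
  exact integral_mono_on hab ((hg.mul hf').intervalIntegrable a b)
    ((hf'.const_mul k).intervalIntegrable a b) h

end EntropyInequality

section Admissibility

variable {f : ℝ → ℝ} {c u₀ uB : ℝ}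

theorem contDiff_expNegInvGlue_sub (d : ℝ) : ContDiff ℝ 1 fun s => expNegInvGlue (s - d) :=
  expNegInvGlue.contDiff.comp (contDiff_id.sub contDiff_const)

theorem expNegInvGlue_mul_le_integral_of_mem_entropySet (hf' : Continuous (deriv f))
    (h : u₀ ∈ entropySet f uB) (d : ℝ) :
    expNegInvGlue (uB - d) * (f uB - f u₀) ≤
      ∫ s in u₀..uB, expNegInvGlue (s - d) * deriv f s :=
  (mem_entropySet_iff hf').1 h _ (contDiff_expNegInvGlue_sub d)
    (expNegInvGlue.monotone.comp fun _ _ hst => sub_le_sub_right hst d)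

theorem notMem_entropySet_of_gt (hf' : Continuous (deriv f))
    (hpos : ∀ s, uB < s → 0 < deriv f s) (h : uB < u₀) : u₀ ∉ entropySet f uB := by
  intro hmem
  have hviolated := expNegInvGlue_mul_le_integral_of_mem_entropySet hf' hmem uB
  have hcont : Continuous fun s => expNegInvGlue (s - uB) * deriv f s :=
    (contDiff_expNegInvGlue_sub uB).continuous.mul hf'
  have hint : 0 < ∫ s in uB..u₀, expNegInvGlue (s - uB) * deriv f s :=
    intervalIntegral_pos_of_pos_on (hcont.intervalIntegrable _ _)
      (fun s hs => mul_pos (expNegInvGlue.pos_of_pos (sub_pos.2 hs.1)) (hpos s hs.1)) h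
  rw [integral_symm, sub_self, expNegInvGlue.zero, zero_mul] at hviolated
  linarith

theorem notMem_entropySet_of_flux_lt (hf : Differentiable ℝ f) (hf' : Continuous (deriv f))
    (hpos : ∀ s, c ≤ s → 0 ≤ deriv f s) (hc : c < uB) (hu₀ : u₀ < uB)
    (hflux : f u₀ < f uB) : u₀ ∉ entropySet f uB := by
  obtain ⟨d, hfd, hd⟩ : ∃ d, f u₀ < f d ∧ d ∈ Ioo (max c u₀) uB :=
    (((hf.continuous.tendsto uB).eventually (lt_mem_nhds hflux)).filter_mono
      nhdsWithin_le_nhds |>.and (Ioo_mem_nhdsLT (max_lt hc hu₀))).exists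
  intro hmem
  set g := fun s => expNegInvGlue (s - d)
  have hg : Continuous g := (contDiff_expNegInvGlue_sub d).continuous
  have hgf : Continuous fun s => g s * deriv f s := hg.mul hf'
  have hvanish : ∫ s in u₀..d, g s * deriv f s = 0 := by
    rw [integral_congr (g := fun _ => 0), integral_zero]
    intro s hs
    rw [uIcc_of_le (le_max_right c u₀ |>.trans hd.1.le)] at hs
    simp [g, expNegInvGlue.zero_of_nonpos (sub_nonpos.2 hs.2)]
  have hbound : ∫ s in d..uB, g s * deriv f s ≤ g uB * (f uB - f d) :=
    integral_mul_deriv_le_mul_sub hf hf' hg hd.2.le fun s hs =>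
      mul_le_mul_of_nonneg_right (expNegInvGlue.monotone (sub_le_sub_right hs.2 d))
        (hpos s ((le_max_left c u₀).trans (hd.1.le.trans hs.1)))
  have hviolated := expNegInvGlue_mul_le_integral_of_mem_entropySet hf' hmem d
  rw [← integral_add_adjacent_intervals (hgf.intervalIntegrable u₀ d)
    (hgf.intervalIntegrable d uB), hvanish, zero_add] at hviolated
  have hguB : 0 < g uB := expNegInvGlue.pos_of_pos (sub_pos.2 hd.2)
  nlinarith

theorem mem_entropySet_of_flux_le (hf : Differentiable ℝ f) (hf' : Continuous (deriv f))
    (hneg : ∀ s ≤ c, deriv f s ≤ 0) (hpos : ∀ s, c ≤ s → 0 ≤ deriv f s) (hc : c ≤ uB)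
    (hu₀ : u₀ ≤ uB) (hflux : f uB ≤ f u₀) : u₀ ∈ entropySet f uB := by
  rw [mem_entropySet_iff hf']
  intro g hg hmono
  calc g uB * (f uB - f u₀) ≤ g c * (f uB - f u₀) :=
        mul_le_mul_of_nonpos_right (hmono hc) (by linarith)
    _ ≤ ∫ s in u₀..uB, g s * deriv f s :=
        mul_sub_le_integral_mul_deriv hf hf' hg.continuous hu₀ fun s _ => ?_
  rcases le_total s c with hs | hs
  · exact mul_le_mul_of_nonpos_right (hmono hs) (hneg s hs)
  · exact mul_le_mul_of_nonneg_right (hmono hs) (hpos s hs)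

end Admissibility

theorem entropySet_eq_of_supercritical
    (f : ℝ → ℝ) (hf : ContDiff ℝ 2 f) (hf'' : ∀ u, 0 < deriv (deriv f) u)
    (ustar : ℝ) (hstar : deriv f ustar = 0)
    (uB : ℝ) (huB : ustar < uB)
    (uBstar : ℝ) (huBstar : uBstar < ustar) (hfeq : f uBstar = f uB) :
    entropySet f uB = Set.Iic uBstar ∪ {uB} := by
  have hfd : Differentiable ℝ f := hf.differentiable two_ne_zero
  have hf' : Continuous (deriv f) := hf.continuous_deriv one_le_two
  have hconvex : StrictConvexOn ℝ univ f := strictConvexOn_univ_of_deriv2_pos hfd.continuous hf''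
  have hf'mono : StrictMono (deriv f) := strictMono_of_deriv_pos hf''
  have hneg : ∀ s ≤ ustar, deriv f s ≤ 0 := fun s hs => hstar ▸ hf'mono.monotone hs
  have hpos : ∀ s, ustar ≤ s → 0 ≤ deriv f s := fun s hs => hstar ▸ hf'mono.monotone hs
  have hlt : uBstar < uB := huBstar.trans huB
  ext u₀
  constructor
  · intro hmem
    by_contra hout
    simp only [mem_union, mem_Iic, mem_singleton_iff, not_or, not_le] at hout
    rcases Ne.lt_or_gt hout.2 with hu₀ | hu₀
    · exact notMem_entropySet_of_flux_lt hfd hf' hpos huB hu₀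
        (hconvex.apply_lt_of_mem_Ioo hfeq ⟨hout.1, hu₀⟩) hmem
    · exact notMem_entropySet_of_gt hf' (fun s hs => hstar ▸ hf'mono (huB.trans hs)) hu₀ hmem
  · rintro (hu₀ | rfl)
    · exact mem_entropySet_of_flux_le hfd hf' hneg hpos huB.le (le_trans hu₀ hlt.le)
        (hconvex.le_apply_of_le_left hlt hfeq hu₀)
    · exact mem_entropySet_of_flux_le hfd hf' hneg hpos huB.le le_rfl le_rfl
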